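/- arXiv:2604.16159 — 9 statements merged into one kernel-verified Lean document; each statement's English description precedes it below -/
import Mathlib

section
/- If H is a halfspace of a convexity space (X, C) and A, B ⊆ X, then A ⊆ H and B ⊆ X \ H if and only if the convex hull of the shadow A/B is contained in H and the convex hull of the shadow B/A is contained in X \ H. -/
variable {X : Type*}

/-- The convex hull in a convexity space given by the family `C` of convex sets. -/
def cHull (C : Set (Set X)) (S : Set X) : Set X :=
  ⋂₀ {D | D ∈ C ∧ S ⊆ D}

/-- The shadow of `A` with respect to `B`. -/
def cShadow (C : Set (Set X)) (A B : Set X) : Set X :=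
  {x | (cHull C (B ∪ {x}) ∩ A).Nonempty}

lemma subset_cHull (C : Set (Set X)) (S : Set X) : S ⊆ cHull C S :=
  fun _ hx _ hD => hD.2 hx

lemma cHull_subset {C : Set (Set X)} {S D : Set X} (hD : D ∈ C) (hSD : S ⊆ D) :
    cHull C S ⊆ D :=
  Set.sInter_subset_of_mem ⟨hD, hSD⟩

lemma subset_cShadow (C : Set (Set X)) (A B : Set X) : A ⊆ cShadow C A B :=
  fun x hx => ⟨x, subset_cHull C _ (Or.inr rfl), hx⟩

lemma cShadow_subset_compl {C : Set (Set X)} {A B D : Set X} (hD : D ∈ C) (hBD : B ⊆ D)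
    (hAD : Disjoint A D) : cShadow C A B ⊆ Dᶜ := by
  intro x ⟨y, hyHull, hyA⟩ hxD
  have hHull : cHull C (B ∪ {x}) ⊆ D :=
    cHull_subset hD (Set.union_subset hBD (Set.singleton_subset_iff.mpr hxD))
  exact hAD.ne_of_mem hyA (hHull hyHull) rfl

theorem halfspace_sep_iff_shadow_hull_sep_general (C : Set (Set X))
    (A B H : Set X) (hH : H ∈ C) (hHc : Hᶜ ∈ C) :
    (A ⊆ H ∧ B ⊆ Hᶜ) ↔
      (cHull C (cShadow C A B) ⊆ H ∧ cHull C (cShadow C B A) ⊆ Hᶜ) := by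
  constructor
  · rintro ⟨hA, hB⟩
    refine ⟨cHull_subset hH ?_, cHull_subset hHc ?_⟩
    · simpa only [compl_compl] using cShadow_subset_compl hHc hB (Set.disjoint_compl_right_iff_subset.mpr hA)
    · exact cShadow_subset_compl hH hA (Set.subset_compl_iff_disjoint_right.mp hB)
  · rintro ⟨hAB, hBA⟩
    exact ⟨(subset_cShadow C A B).trans ((subset_cHull C _).trans hAB),
      (subset_cShadow C B A).trans ((subset_cHull C _).trans hBA)⟩

theorem halfspace_sep_iff_shadow_hull_sep (C : Set (Set X))
    (hempty : ∅ ∈ C) (huniv : Set.univ ∈ C)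
    (hinter : ∀ D ⊆ C, ⋂₀ D ∈ C)
    (A B H : Set X) (hH : H ∈ C) (hHc : Hᶜ ∈ C) :
    (A ⊆ H ∧ B ⊆ Hᶜ) ↔
      (cHull C (cShadow C A B) ⊆ H ∧ cHull C (cShadow C B A) ⊆ Hᶜ) :=
  halfspace_sep_iff_shadow_hull_sep_general C A B H hH hHc
end

section
/- Every Helly graph is pseudo-modular: for any three vertices u, v, w with 1 ≤ d(v,w) ≤ 2 and d(u,v) = d(u,w) = k ≥ 2, there exists a vertex x adjacent to both v and w with d(u,x) = k−1. -/
variable {V : Type*}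

/-- The ball of radius `r` around `v`. -/
def gball (G : SimpleGraph V) (v : V) (r : ℕ) : Set V :=
  {x | G.dist v x ≤ r}

/-- A graph is Helly if every family of pairwise intersecting balls has a common vertex. -/
def HellyGraph (G : SimpleGraph V) : Prop :=
  ∀ {ι : Type} (c : ι → V) (r : ι → ℕ),
    (∀ i j, (gball G (c i) (r i) ∩ gball G (c j) (r j)).Nonempty) →
      (⋂ i, gball G (c i) (r i)).Nonempty

/-!
Apply the Helly property to the balls `B(u, k - 1)`, `B(v, 1)` and `B(w, 1)`. In a connected
graph two balls meet as soon as the distance of their centres is at most the sum of the radii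
(cut a geodesic between the centres), so these three balls pairwise intersect. A common vertex `x`
satisfies `d(u, x) ≤ k - 1 < k = d(u, v)`, hence `x ≠ v, w`, so `x` is adjacent to `v` and `w`,
and then `d(u, x) ≥ d(u, v) - 1 = k - 1`.
-/

namespace SimpleGraph

variable {G : SimpleGraph V}

lemma Connected.exists_dist_le_dist_le (hG : G.Connected) {u v : V} {m n : ℕ}
    (h : G.dist u v ≤ m + n) : ∃ z, G.dist u z ≤ m ∧ G.dist z v ≤ n := by
  obtain ⟨p, hp⟩ := hG.exists_walk_length_eq_dist u v
  refine ⟨p.getVert m, (dist_le (p.take m)).trans ?_, (dist_le (p.drop m)).trans ?_⟩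
  · simp only [Walk.take_length, inf_le_left]
  · rw [Walk.drop_length]
    omega

lemma Connected.gball_inter_nonempty (hG : G.Connected) {a b : V} {r s : ℕ}
    (h : G.dist a b ≤ r + s) : (gball G a r ∩ gball G b s).Nonempty := by
  obtain ⟨z, haz, hzb⟩ := hG.exists_dist_le_dist_le h
  exact ⟨z, haz, by rwa [gball, Set.mem_ofPred_eq, dist_comm]⟩

lemma Connected.adj_of_dist_le_one (hG : G.Connected) {v x : V} (hne : v ≠ x)
    (h : G.dist v x ≤ 1) : G.Adj v x := by
  have := hG.pos_dist_of_ne hne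
  exact dist_eq_one_iff_adj.mp (by omega)

end SimpleGraph

lemma HellyGraph.exists_forall_dist_le {G : SimpleGraph V} (hH : HellyGraph G)
    (hG : G.Connected) {ι : Type} (c : ι → V) (r : ι → ℕ)
    (h : ∀ i j, G.dist (c i) (c j) ≤ r i + r j) : ∃ x, ∀ i, G.dist (c i) x ≤ r i := by
  obtain ⟨x, hx⟩ := hH c r fun i j => hG.gball_inter_nonempty (h i j)
  exact ⟨x, Set.mem_iInter.mp hx⟩

theorem helly_is_pseudoModular (G : SimpleGraph V) (hc : G.Connected)
    (hH : HellyGraph G) :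
    ∀ (u v w : V) (k : ℕ), 1 ≤ G.dist v w → G.dist v w ≤ 2 →
      G.dist u v = k → G.dist u w = k → 2 ≤ k →
      ∃ x, G.Adj v x ∧ G.Adj w x ∧ G.dist u x = k - 1 := by
  intro u v w k _ hvw huv huw hk
  obtain ⟨x, hx⟩ := hH.exists_forall_dist_le hc ![u, v, w] ![k - 1, 1, 1] <| by
    intro i j
    fin_cases i <;> fin_cases j <;>
      simp only [Fin.isValue, Fin.zero_eta, Fin.mk_one, Fin.reduceFinMk, Matrix.cons_val,
        Matrix.cons_val_zero, Matrix.cons_val_one, SimpleGraph.dist_self, G.dist_comm (u := w),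
        G.dist_comm (v := u)] <;>
      omega
  have hux : G.dist u x ≤ k - 1 := hx 0
  have hvx : G.dist v x ≤ 1 := hx 1
  have hwx : G.dist w x ≤ 1 := hx 2
  have hv_ne : v ≠ x := by rintro rfl; omega
  have hw_ne : w ≠ x := by rintro rfl; omega
  have huv_le : G.dist u v ≤ G.dist u x + G.dist x v := hc.dist_triangle
  rw [G.dist_comm (u := x)] at huv_le
  exact ⟨x, hc.adj_of_dist_le_one hv_ne hvx, hc.adj_of_dist_le_one hw_ne hwx, by omega⟩
end

section
/- If a graph satisfies the 3-Helly property for balls (any three pairwise intersecting balls have a common point), then it is pseudo-modular. -/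
/-!
The three balls `B(u, k - 1)`, `B(v, 1)` and `B(w, 1)` pairwise intersect, since in a graph two
balls meet as soon as the distance of their centres is at most the sum of their radii. A common
point `x` of all three is then a common neighbour of `v` and `w` at distance `k - 1` from `u`.
-/

variable {V : Type*}

/-- A graph is pseudo-modular if any two vertices at distance 1 or 2 that are equidistant
(at distance `k ≥ 2`) from a third vertex `u` have a common neighbor at distance `k - 1`
from `u`. -/
def PseudoModular (G : SimpleGraph V) : Prop :=
  ∀ u v w : V, 1 ≤ G.dist v w → G.dist v w ≤ 2 → 2 ≤ G.dist u v →
    G.dist u v = G.dist u w →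
    ∃ x, G.Adj v x ∧ G.Adj w x ∧ G.dist u x = G.dist u v - 1

namespace SimpleGraph

variable {G : SimpleGraph V}

lemma Connected.exists_adj_dist_add_one_eq (hc : G.Connected) {u v : V} (huv : u ≠ v) :
    ∃ x, G.Adj u x ∧ G.dist x v + 1 = G.dist u v := by
  obtain ⟨p, hp⟩ := hc.exists_walk_length_eq_dist u v
  cases p with
  | nil => exact absurd rfl huv
  | @cons _ x _ hux q =>
    refine ⟨x, hux, le_antisymm ?_ ?_⟩
    · simpa [← hp] using dist_le q
    · have := hc.dist_triangle (u := u) (v := x) (w := v)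
      rw [dist_eq_one_iff_adj.mpr hux] at this
      omega

lemma Connected.gball_inter_gball_nonempty (hc : G.Connected) {a b : V} {r s : ℕ}
    (h : G.dist a b ≤ r + s) : (gball G a r ∩ gball G b s).Nonempty := by
  induction r generalizing a with
  | zero => exact ⟨a, by simp [gball], by simpa [gball, dist_comm] using h⟩
  | succ r ih =>
    by_cases hab : a = b
    · exact ⟨a, by simp [gball], by simp [gball, hab]⟩
    obtain ⟨a', haa', hdist⟩ := hc.exists_adj_dist_add_one_eq hab
    obtain ⟨x, hxa', hxb⟩ := ih (a := a') (by omega)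
    refine ⟨x, ?_, hxb⟩
    have := hc.dist_triangle (u := a) (v := a') (w := x)
    simp only [gball, Set.mem_ofPred_eq, dist_eq_one_iff_adj.mpr haa'] at this hxa' ⊢
    omega

lemma Connected.adj_of_dist_le_one_of_dist_lt (hc : G.Connected) {u v x : V}
    (hvx : G.dist v x ≤ 1) (hux : G.dist u x < G.dist u v) :
    G.Adj v x ∧ G.dist u x + 1 = G.dist u v := by
  have hne : v ≠ x := by rintro rfl; omega
  have hadj : G.dist v x = 1 := le_antisymm hvx (hc.pos_dist_of_ne hne)
  have := hc.dist_triangle (u := u) (v := x) (w := v)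
  rw [dist_comm (u := x), hadj] at this
  exact ⟨dist_eq_one_iff_adj.mp hadj, by omega⟩

end SimpleGraph

theorem threeHelly_is_pseudoModular (G : SimpleGraph V) (hc : G.Connected)
    (h3 : ∀ (c1 c2 c3 : V) (r1 r2 r3 : ℕ),
      (gball G c1 r1 ∩ gball G c2 r2).Nonempty →
      (gball G c1 r1 ∩ gball G c3 r3).Nonempty →
      (gball G c2 r2 ∩ gball G c3 r3).Nonempty →
      (gball G c1 r1 ∩ gball G c2 r2 ∩ gball G c3 r3).Nonempty) :
    PseudoModular G := by
  intro u v w _ hvw hk huw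
  obtain ⟨x, ⟨hux, hvx⟩, hwx⟩ := h3 u v w (G.dist u v - 1) 1 1
    (hc.gball_inter_gball_nonempty (by omega))
    (hc.gball_inter_gball_nonempty (by omega))
    (hc.gball_inter_gball_nonempty hvw)
  simp only [gball, Set.mem_ofPred_eq] at hux hvx hwx
  obtain ⟨hadj_v, hdist⟩ := hc.adj_of_dist_le_one_of_dist_lt (u := u) hvx (by omega)
  obtain ⟨hadj_w, -⟩ := hc.adj_of_dist_le_one_of_dist_lt (u := u) hwx (by omega)
  exact ⟨x, hadj_v, hadj_w, by omega⟩
end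

section
/- Every weakly modular graph is meshed: the triangle and quadrangle conditions together imply the weak quadrangle condition QC⁻. -/
/-!
Let `d(v, w) = 2` with `d(u, v) ≤ d(u, w)`, and let `z` be a common neighbour of `v` and `w`.
Either `z` already satisfies `2 d(u, z) ≤ d(u, v) + d(u, w)`, or `z` lies one level further
from `u` than `v`. If `w` is on the level of `v`, the quadrangle condition yields a common
neighbour one level closer. If `w` is on the level of `z`, the triangle condition applied to the
edge `zw` gives a neighbour `x` of `w` on the level of `v`; when `x ≁ v`, the quadrangle condition
gives a common neighbour `y` of `v` and `x` one level below, and since `d(w, y) = d(w, v) = 2`,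
the triangle condition with base point `w` on the edge `yv` produces the required common neighbour
of `v` and `w`.
-/

variable {V : Type*}

/-- Triangle condition. -/
def TriangleCond (G : SimpleGraph V) : Prop :=
  ∀ u v w : V, G.Adj v w → G.dist u v = G.dist u w → 1 ≤ G.dist u v →
    ∃ x, G.Adj v x ∧ G.Adj w x ∧ G.dist u x = G.dist u v - 1

/-- Quadrangle condition. -/
def QuadCond (G : SimpleGraph V) : Prop :=
  ∀ u v w z : V, G.Adj v z → G.Adj z w → ¬ G.Adj v w →
    2 ≤ G.dist u v → G.dist u v = G.dist u w → G.dist u z = G.dist u v + 1 →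
    ∃ x, G.Adj v x ∧ G.Adj w x ∧ G.dist u x = G.dist u v - 1

/-- Meshed: weak quadrangle condition QC⁻. -/
def Meshed (G : SimpleGraph V) : Prop :=
  ∀ u v w : V, G.dist v w = 2 →
    ∃ x, G.Adj v x ∧ G.Adj w x ∧ 2 * G.dist u x ≤ G.dist u v + G.dist u w

open SimpleGraph

section

variable {G : SimpleGraph V} {u v w z : V}

namespace SimpleGraph

theorem Adj.dist_le_dist_add_one (h : G.Adj v w) (u : V) : G.dist u w ≤ G.dist u v + 1 := by
  rcases h.diff_dist_adj (u := u) with h' | h' | h' <;> omega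

theorem exists_adj_adj_of_dist_eq_two (h : G.dist v w = 2) : ∃ z, G.Adj v z ∧ G.Adj z w := by
  have hedist : G.edist v w = 2 := by
    rw [← (Reachable.of_dist_ne_zero (h ▸ two_ne_zero)).coe_dist_eq_edist, h]
    rfl
  obtain ⟨-, -, z, hvz, hwz⟩ := edist_eq_two_iff.mp hedist
  exact ⟨z, hvz, hwz.symm⟩

end SimpleGraph

/-- At level one the quadrangle condition holds trivially, with `u` as the common neighbour. -/
theorem QuadCond.exists_adj_adj_dist_eq_sub_one (hQC : QuadCond G) (hvz : G.Adj v z)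
    (hzw : G.Adj z w) (hvw : ¬ G.Adj v w) (hv : 1 ≤ G.dist u v)
    (hvw_eq : G.dist u v = G.dist u w) (hz : G.dist u z = G.dist u v + 1) :
    ∃ x, G.Adj v x ∧ G.Adj w x ∧ G.dist u x = G.dist u v - 1 := by
  rcases hv.eq_or_lt with hv1 | hv2
  · refine ⟨u, (dist_eq_one_iff_adj.mp hv1.symm).symm,
      (dist_eq_one_iff_adj.mp (hvw_eq ▸ hv1.symm)).symm, ?_⟩
    rw [dist_self, ← hv1]
  · exact hQC u v w z hvz hzw hvw hv2 hvw_eq hz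

theorem exists_adj_adj_dist_le_of_dist_eq_add_one (hTC : TriangleCond G) (hQC : QuadCond G)
    (hvw : G.dist v w = 2) (hvz : G.Adj v z) (hzw : G.Adj z w) (hv : 1 ≤ G.dist u v)
    (hw : G.dist u w = G.dist u v + 1) (hz : G.dist u z = G.dist u v + 1) :
    ∃ s, G.Adj v s ∧ G.Adj w s ∧ G.dist u s ≤ G.dist u v := by
  obtain ⟨x, hzx, hwx, hx⟩ := hTC u z w hzw (hz.trans hw.symm) (by omega)
  by_cases hvx : G.Adj v x
  · exact ⟨x, hvx, hwx, by omega⟩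
  obtain ⟨y, hvy, hxy, hy⟩ :=
    hQC.exists_adj_adj_dist_eq_sub_one hvz hzx hvx hv (by omega) hz
  have hwy : G.dist w y = 2 := by
    have hle : G.dist w y ≤ G.dist w x + G.dist x y := hxy.reachable.dist_triangle_right w
    have hge : G.dist u w ≤ G.dist u y + G.dist y w :=
      (hxy.symm.reachable.trans hwx.symm.reachable).dist_triangle_right u
    rw [dist_eq_one_iff_adj.mpr hwx, dist_eq_one_iff_adj.mpr hxy] at hle
    rw [dist_comm (u := y)] at hge
    omega
  obtain ⟨s, hys, hvs, hs⟩ :=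
    hTC w y v hvy.symm (hwy.trans (dist_comm.trans hvw).symm) (by omega)
  have hws : G.Adj w s := dist_eq_one_iff_adj.mp (by omega)
  exact ⟨s, hvs, hws, by have := hys.dist_le_dist_add_one u; omega⟩

theorem exists_adj_adj_two_mul_dist_le_of_dist_le (hTC : TriangleCond G) (hQC : QuadCond G)
    (hvw : G.dist v w = 2) (hle : G.dist u v ≤ G.dist u w) :
    ∃ x, G.Adj v x ∧ G.Adj w x ∧ 2 * G.dist u x ≤ G.dist u v + G.dist u w := by
  obtain ⟨z, hvz, hzw⟩ := exists_adj_adj_of_dist_eq_two hvw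
  by_cases hzmid : 2 * G.dist u z ≤ G.dist u v + G.dist u w
  · exact ⟨z, hvz, hzw.symm, hzmid⟩
  have hz_le := hvz.dist_le_dist_add_one u
  have hw_le := hzw.dist_le_dist_add_one u
  have hz : G.dist u z = G.dist u v + 1 := by omega
  have hv : 1 ≤ G.dist u v := by
    by_contra! hv0
    have huv : G.Reachable u v :=
      (Reachable.of_dist_ne_zero (by omega : G.dist u z ≠ 0)).trans hvz.symm.reachable
    obtain rfl := huv.dist_eq_zero_iff.mp (by omega)
    omega
  have hnadj : ¬ G.Adj v w := fun h ↦ by simp [dist_eq_one_iff_adj.mpr h] at hvw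
  rcases (by omega : G.dist u w = G.dist u v ∨ G.dist u w = G.dist u v + 1) with hw | hw
  · obtain ⟨x, hvx, hwx, hx⟩ := hQC.exists_adj_adj_dist_eq_sub_one hvz hzw hnadj hv hw.symm hz
    exact ⟨x, hvx, hwx, by omega⟩
  · obtain ⟨x, hvx, hwx, hx⟩ :=
      exists_adj_adj_dist_le_of_dist_eq_add_one hTC hQC hvw hvz hzw hv hw hz
    exact ⟨x, hvx, hwx, by omega⟩

end

theorem weaklyModular_is_meshed_general (G : SimpleGraph V)
    (hTC : TriangleCond G) (hQC : QuadCond G) : Meshed G := by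
  intro u v w hvw
  rcases le_total (G.dist u v) (G.dist u w) with h | h
  · exact exists_adj_adj_two_mul_dist_le_of_dist_le hTC hQC hvw h
  · obtain ⟨x, hwx, hvx, hx⟩ :=
      exists_adj_adj_two_mul_dist_le_of_dist_le hTC hQC (dist_comm.trans hvw) h
    exact ⟨x, hvx, hwx, by omega⟩

theorem weaklyModular_is_meshed (G : SimpleGraph V) (hc : G.Connected)
    (hTC : TriangleCond G) (hQC : QuadCond G) : Meshed G :=
  weaklyModular_is_meshed_general G hTC hQC
end

section
/- Every matroid basis graph is meshed: for any vertices u, v, w with d(v,w) = 2, there exists a common neighbor x of v and w such that 2·d(u,x) ≤ d(u,v) + d(u,w). -/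
variable {V : Type*}

/-- The geodesic interval between `u` and `v`. -/
def interval (G : SimpleGraph V) (u v : V) : Set V :=
  {x | G.dist u x + G.dist x v = G.dist u v}

/-- `a x b y` is a square: a 4-cycle with nonadjacent diagonals. -/
def Square4 (G : SimpleGraph V) (a x b y : V) : Prop :=
  G.Adj a x ∧ G.Adj x b ∧ G.Adj b y ∧ G.Adj y a ∧ ¬ G.Adj a b ∧ ¬ G.Adj x y

/-- Interval condition (weak form): any interval between vertices at distance 2
contains a square through its endpoints. -/
def IntervalCond (G : SimpleGraph V) : Prop :=
  ∀ u v : V, G.dist u v = 2 →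
    ∃ x y, x ∈ interval G u v ∧ y ∈ interval G u v ∧ Square4 G u x v y

/-- Positioning condition. -/
def PositioningCond (G : SimpleGraph V) : Prop :=
  ∀ u a x b y : V, Square4 G a x b y →
    G.dist u a + G.dist u b = G.dist u x + G.dist u y

theorem Square4.exists_adj_adj_two_mul_dist_le {G : SimpleGraph V} {u v x w y : V}
    (hsq : Square4 G v x w y)
    (hpos : G.dist u v + G.dist u w = G.dist u x + G.dist u y) :
    ∃ z, G.Adj v z ∧ G.Adj w z ∧ 2 * G.dist u z ≤ G.dist u v + G.dist u w := by
  obtain ⟨hvx, hxw, hwy, hyv, -, -⟩ := hsq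
  rcases le_total (G.dist u x) (G.dist u y) with h | h
  · exact ⟨x, hvx, hxw.symm, by omega⟩
  · exact ⟨y, hyv.symm, hwy, by omega⟩

theorem matroidBasisGraph_is_meshed_general (G : SimpleGraph V)
    (hIC : IntervalCond G) (hPC : PositioningCond G) : Meshed G := by
  intro u v w hvw
  obtain ⟨x, y, -, -, hsq⟩ := hIC v w hvw
  exact hsq.exists_adj_adj_two_mul_dist_le (hPC u v x w y hsq)

theorem matroidBasisGraph_is_meshed (G : SimpleGraph V) (hc : G.Connected)
    (hIC : IntervalCond G) (hPC : PositioningCond G) : Meshed G :=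
  matroidBasisGraph_is_meshed_general G hIC hPC
end

section
/- Let (A,B) be a shadow-closed pair of sets in a graph G (i.e., A = A/B and B = B/A under geodesic convexity). Then for any x ∉ A ∪ B and any edge ab with a ∈ A and b ∈ B, we have d(x,a) = d(x,b). -/
variable {V : Type*}

def GeoConvex (G : SimpleGraph V) (X : Set V) : Prop :=
  ∀ u ∈ X, ∀ v ∈ X, interval G u v ⊆ X

def geoHull (G : SimpleGraph V) (S : Set V) : Set V :=
  ⋂₀ {C | GeoConvex G C ∧ S ⊆ C}

/-- The geodesic shadow of `A` with respect to `B`. -/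
def shadow (G : SimpleGraph V) (A B : Set V) : Set V :=
  {x | (geoHull G (B ∪ {x}) ∩ A).Nonempty}

/-! If `d(x,a) ≠ d(x,b)` for an edge `ab`, one endpoint lies on a geodesic from `x` to the other,
so `x` lies in the shadow of that endpoint's side; shadow-closedness then puts `x` in `A ∪ B`.
No connectivity is needed: if `x` cannot reach `a`, it cannot reach `b`, and both distances are
the junk value `0`. -/

section

variable {G : SimpleGraph V}

theorem subset_geoHull (S : Set V) : S ⊆ geoHull G S :=
  fun _ hs _ hC => hC.2 hs

theorem geoConvex_geoHull (S : Set V) : GeoConvex G (geoHull G S) :=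
  fun u hu v hv _ hy C hC => hC.1 u (hu C hC) v (hv C hC) hy

theorem interval_subset_geoHull {S : Set V} {u v : V} (hu : u ∈ S) (hv : v ∈ S) :
    interval G u v ⊆ geoHull G S :=
  geoConvex_geoHull S u (subset_geoHull S hu) v (subset_geoHull S hv)

theorem mem_shadow_of_mem_interval {A B : Set V} {x a b : V} (ha : a ∈ A) (hb : b ∈ B)
    (h : a ∈ interval G x b) : x ∈ shadow G A B :=
  ⟨a, interval_subset_geoHull (Set.mem_union_right B (Set.mem_singleton x))
    (Set.mem_union_left {x} hb) h, ha⟩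

theorem mem_interval_or_mem_interval_of_adj {x a b : V} (hab : G.Adj a b)
    (hne : G.dist x a ≠ G.dist x b) : a ∈ interval G x b ∨ b ∈ interval G x a := by
  have hab₁ : G.dist a b = 1 := SimpleGraph.dist_eq_one_iff_adj.mpr hab
  have hba₁ : G.dist b a = 1 := SimpleGraph.dist_eq_one_iff_adj.mpr hab.symm
  simp only [interval, Set.mem_ofPred_eq]
  rcases hab.diff_dist_adj (u := x) with h | h | h <;> omega

end

theorem shadowClosed_equidistant_general (G : SimpleGraph V)
    (A B : Set V)
    (hA : shadow G A B = A) (hB : shadow G B A = B)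
    (x : V) (hx : x ∉ A ∪ B)
    (a b : V) (ha : a ∈ A) (hb : b ∈ B) (hab : G.Adj a b) :
    G.dist x a = G.dist x b := by
  by_contra hne
  rcases mem_interval_or_mem_interval_of_adj hab hne with hax | hbx
  · exact hx (Or.inl (hA ▸ mem_shadow_of_mem_interval ha hb hax))
  · exact hx (Or.inr (hB ▸ mem_shadow_of_mem_interval hb ha hbx))

theorem shadowClosed_equidistant (G : SimpleGraph V) (hc : G.Connected)
    (A B : Set V) (hdisj : Disjoint A B)
    (hA : shadow G A B = A) (hB : shadow G B A = B)
    (x : V) (hx : x ∉ A ∪ B)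
    (a b : V) (ha : a ∈ A) (hb : b ∈ B) (hab : G.Adj a b) :
    G.dist x a = G.dist x b :=
  shadowClosed_equidistant_general G A B hA hB x hx a b ha hb hab
end

section
/- If a halfspace H of a graph G (with geodesic convexity) separates sets A and B, then H also separates the shadows A/B and B/A; in particular the iterated shadow-closure (A*, B*) satisfies: there is a halfspace separating A and B iff there is one separating A* and B*. -/
variable {V : Type*}

/-- The iterated shadow-closure sequence `(Aⁱ, Bⁱ)`. -/
def closureSeq (G : SimpleGraph V) (A B : Set V) : ℕ → Set V × Set V
  | 0 => (A, B)
  | n + 1 =>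
      (geoHull G (shadow G (closureSeq G A B n).1 (closureSeq G A B n).2),
       geoHull G (shadow G (closureSeq G A B n).2 (closureSeq G A B n).1))

/-!
If `x ∉ H` and `B ⊆ Hᶜ`, then the hull of `B ∪ {x}` stays inside the convex set `Hᶜ` and so
misses `A ⊆ H`; hence `x` is not in the shadow `A/B`. Taking convex hulls keeps everything inside
`H` (resp. `Hᶜ`), so a separating halfspace separates every stage of the shadow-closure sequence.
Conversely the sequence only grows, so a halfspace separating one of its stages separates `A`
and `B`.
-/

variable {G : SimpleGraph V}

theorem geoHull_subset {S C : Set V} (hC : GeoConvex G C) (hSC : S ⊆ C) : geoHull G S ⊆ C :=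
  fun _ hx => hx C ⟨hC, hSC⟩

theorem subset_shadow (A B : Set V) : A ⊆ shadow G A B :=
  fun x hx => ⟨x, subset_geoHull _ (Or.inr rfl), hx⟩

theorem shadow_subset {A B H : Set V} (hHc : GeoConvex G Hᶜ) (hA : A ⊆ H) (hB : B ⊆ Hᶜ) :
    shadow G A B ⊆ H := by
  intro x ⟨y, hy, hyA⟩
  by_contra hxH
  have hull_compl : geoHull G (B ∪ {x}) ⊆ Hᶜ :=
    geoHull_subset hHc (Set.union_subset hB (Set.singleton_subset_iff.mpr hxH))
  exact hull_compl hy (hA hyA)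

theorem shadow_subset_and_shadow_subset_compl {A B H : Set V} (hH : GeoConvex G H)
    (hHc : GeoConvex G Hᶜ) (hA : A ⊆ H) (hB : B ⊆ Hᶜ) :
    shadow G A B ⊆ H ∧ shadow G B A ⊆ Hᶜ :=
  ⟨shadow_subset hHc hA hB,
    shadow_subset (by rwa [compl_compl]) hB (by rwa [compl_compl])⟩

theorem closureSeq_subset_and_subset_compl {A B H : Set V} (hH : GeoConvex G H)
    (hHc : GeoConvex G Hᶜ) (hA : A ⊆ H) (hB : B ⊆ Hᶜ) (n : ℕ) :
    (closureSeq G A B n).1 ⊆ H ∧ (closureSeq G A B n).2 ⊆ Hᶜ := by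
  induction n with
  | zero => exact ⟨hA, hB⟩
  | succ n ih =>
    obtain ⟨hShadowA, hShadowB⟩ := shadow_subset_and_shadow_subset_compl hH hHc ih.1 ih.2
    exact ⟨geoHull_subset hH hShadowA, geoHull_subset hHc hShadowB⟩

theorem subset_closureSeq (A B : Set V) (n : ℕ) :
    A ⊆ (closureSeq G A B n).1 ∧ B ⊆ (closureSeq G A B n).2 := by
  induction n with
  | zero => exact ⟨subset_rfl, subset_rfl⟩
  | succ n ih =>
    exact ⟨ih.1.trans ((subset_shadow _ _).trans (subset_geoHull _)),
      ih.2.trans ((subset_shadow _ _).trans (subset_geoHull _))⟩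

theorem halfspace_sep_shadow_closure_general (G : SimpleGraph V)
    (A B : Set V) :
    (∀ H : Set V, GeoConvex G H → GeoConvex G Hᶜ → A ⊆ H → B ⊆ Hᶜ →
        shadow G A B ⊆ H ∧ shadow G B A ⊆ Hᶜ) ∧
      ∀ N : ℕ, closureSeq G A B (N + 1) = closureSeq G A B N →
        ((∃ H : Set V, GeoConvex G H ∧ GeoConvex G Hᶜ ∧ A ⊆ H ∧ B ⊆ Hᶜ) ↔
          ∃ H : Set V, GeoConvex G H ∧ GeoConvex G Hᶜ ∧
            (closureSeq G A B N).1 ⊆ H ∧ (closureSeq G A B N).2 ⊆ Hᶜ) := by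
  refine ⟨fun _ => shadow_subset_and_shadow_subset_compl, fun N _ => ⟨?_, ?_⟩⟩
  · rintro ⟨H, hH, hHc, hA, hB⟩
    exact ⟨H, hH, hHc, closureSeq_subset_and_subset_compl hH hHc hA hB N⟩
  · rintro ⟨H, hH, hHc, hA, hB⟩
    obtain ⟨hAN, hBN⟩ := subset_closureSeq (G := G) A B N
    exact ⟨H, hH, hHc, hAN.trans hA, hBN.trans hB⟩

theorem halfspace_sep_shadow_closure (G : SimpleGraph V) (hc : G.Connected)
    (A B : Set V) :
    (∀ H : Set V, GeoConvex G H → GeoConvex G Hᶜ → A ⊆ H → B ⊆ Hᶜ →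
        shadow G A B ⊆ H ∧ shadow G B A ⊆ Hᶜ) ∧
      ∀ N : ℕ, closureSeq G A B (N + 1) = closureSeq G A B N →
        ((∃ H : Set V, GeoConvex G H ∧ GeoConvex G Hᶜ ∧ A ⊆ H ∧ B ⊆ Hᶜ) ↔
          ∃ H : Set V, GeoConvex G H ∧ GeoConvex G Hᶜ ∧
            (closureSeq G A B N).1 ⊆ H ∧ (closureSeq G A B N).2 ⊆ Hᶜ) :=
  halfspace_sep_shadow_closure_general G A B
end

section
/- In a graph satisfying the interval condition and the positioning condition (i.e., a matroid basis graph), for any vertices u, v, w with d(v,w) = 2 and d(u,v) + d(u,w) = k, there exist two common neighbors x, y of v and w forming a square vxwy with d(u,x) + d(u,y) = k; in particular min(d(u,x), d(u,y)) ≤ k/2. -/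
variable {V : Type*}

theorem square_with_balanced_distances_general (G : SimpleGraph V)
    (hIC : IntervalCond G) (hPC : PositioningCond G)
    (u v w : V) (hvw : G.dist v w = 2) (k : ℕ) (hk : G.dist u v + G.dist u w = k) :
    ∃ x y, Square4 G v x w y ∧ G.dist u x + G.dist u y = k ∧
      2 * min (G.dist u x) (G.dist u y) ≤ k := by
  obtain ⟨x, y, -, -, hsq⟩ := hIC v w hvw
  have hbalanced := hPC u v x w y hsq
  exact ⟨x, y, hsq, by omega, by omega⟩

theorem square_with_balanced_distances (G : SimpleGraph V) (hc : G.Connected)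
    (hIC : IntervalCond G) (hPC : PositioningCond G)
    (u v w : V) (hvw : G.dist v w = 2) (k : ℕ) (hk : G.dist u v + G.dist u w = k) :
    ∃ x y, Square4 G v x w y ∧ G.dist u x + G.dist u y = k ∧
      2 * min (G.dist u x) (G.dist u y) ≤ k :=
  square_with_balanced_distances_general G hIC hPC u v w hvw k hk
end

section
/- In a pseudo-modular graph G with a shadow-closed osculating pair (A,B) of convex sets, there do not exist vertices x, y ∈ V ∖ (A∪B) with d(x,y) = 2, a vertex z ∈ I(x,y) ∖ (A∪B), an edge ab with a ∈ A, b ∈ B, and d(x,a)=d(x,b)=d(y,a)=d(y,b)=d(z,a)=d(z,b)=k ≥ 2, such that simultaneously: no common neighbor u of x and y with d(u,b) = k−1 lies in V ∖ (A∪B) or in A, and I(x,y) ∩ B = ∅. In other words, the pseudo-modularity forces a common neighbor u of x,y with d(u,b)=k−1, and u must lie in B, giving I(x,y) ∩ B ≠ ∅. -/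
variable {V : Type*}

/-!
Pseudo-modularity applied to `b`, `x`, `y` gives a common neighbour `u` of `x` and `y` with
`d(u, b) = k - 1`, and then `d(u, a) ∈ {k - 1, k}`. If `u ∈ A`, then `u` lies on an `x`–`b`
geodesic, so `x ∈ A/B = A`; if `d(u, a) = k`, then `b` lies on a `u`–`a` geodesic, so
`u ∈ B/A = B`.
-/

section

variable {G : SimpleGraph V}

theorem mem_shadow_of_mem_interval_s17 {A B : Set V} {x v w : V} (hv : v ∈ B) (hw : w ∈ A)
    (hwI : w ∈ interval G x v) : x ∈ shadow G A B :=
  ⟨w, interval_subset_geoHull (S := B ∪ {x}) (Or.inr rfl) (Or.inl hv) hwI, hw⟩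

theorem mem_interval_of_adj_left {u v w : V} (h : G.Adj u w)
    (hd : G.dist u v = G.dist w v + 1) : w ∈ interval G u v := by
  show _ = _
  rw [SimpleGraph.dist_eq_one_iff_adj.2 h, hd, add_comm]

theorem mem_interval_of_adj_right {u v w : V} (h : G.Adj w v)
    (hd : G.dist u v = G.dist u w + 1) : w ∈ interval G u v := by
  show _ = _
  rw [SimpleGraph.dist_eq_one_iff_adj.2 h, hd]

theorem PseudoModular.exists_common_neighbor (hpm : PseudoModular G) {x y b : V} {k : ℕ}
    (h1 : 1 ≤ G.dist x y) (h2 : G.dist x y ≤ 2) (hk : 2 ≤ k)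
    (hxb : G.dist x b = k) (hyb : G.dist y b = k) :
    ∃ u, G.Adj x u ∧ G.Adj y u ∧ G.dist u b = k - 1 := by
  obtain ⟨u, hxu, hyu, hu⟩ := hpm b x y h1 h2 (by rwa [G.dist_comm, hxb])
    (by rw [G.dist_comm, hxb, G.dist_comm, hyb])
  exact ⟨u, hxu, hyu, by rw [G.dist_comm, hu, G.dist_comm, hxb]⟩

end

theorem pseudoModular_local_convexity_obstruction_general (G : SimpleGraph V)
    (hpm : PseudoModular G)
    (A B : Set V)
    (hA : shadow G A B = A) (hB : shadow G B A = B)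
    (x y a b : V) (k : ℕ)
    (hx : x ∉ A ∪ B)
    (hxy : G.dist x y = 2)
    (ha : a ∈ A) (hb : b ∈ B) (hab : G.Adj a b)
    (hxa : G.dist x a = k) (hxb : G.dist x b = k)
    (hyb : G.dist y b = k) (hk : 2 ≤ k) :
    (interval G x y ∩ B).Nonempty ∨
      ∃ u, G.Adj x u ∧ G.Adj y u ∧ u ∉ A ∪ B ∧
        G.dist u a = k - 1 ∧ G.dist u b = k - 1 := by
  obtain ⟨u, hxu, hyu, hub⟩ := hpm.exists_common_neighbor (by omega) (by omega) hk hxb hyb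
  have hua : k - 1 ≤ G.dist u a ∧ G.dist u a ≤ k := by
    have hx_step := hxu.diff_dist_adj (u := a)
    have hab_step := hab.diff_dist_adj (u := u)
    rw [G.dist_comm (u := a), G.dist_comm (u := a), hxa] at hx_step
    omega
  by_cases huB : u ∈ B
  · refine .inl ⟨u, mem_interval_of_adj_left hxu ?_, huB⟩
    rw [hxy, G.dist_comm, SimpleGraph.dist_eq_one_iff_adj.2 hyu]
  have huA : u ∉ A := fun huA =>
    hx (.inl (hA ▸ mem_shadow_of_mem_interval_s17 hb huA (mem_interval_of_adj_left hxu (by omega))))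
  have hua_ne : G.dist u a ≠ k := fun h =>
    huB (hB ▸ mem_shadow_of_mem_interval_s17 ha hb (mem_interval_of_adj_right hab.symm (by omega)))
  exact .inr ⟨u, hxu, hyu, by simp [huA, huB], by omega, hub⟩

theorem pseudoModular_local_convexity_obstruction (G : SimpleGraph V)
    (hc : G.Connected) (hpm : PseudoModular G)
    (A B : Set V) (hAconv : GeoConvex G A) (hBconv : GeoConvex G B)
    (hdisj : Disjoint A B)
    (hA : shadow G A B = A) (hB : shadow G B A = B)
    (hosc : ∃ a ∈ A, ∃ b ∈ B, G.Adj a b)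
    (x y z a b : V) (k : ℕ)
    (hx : x ∉ A ∪ B) (hy : y ∉ A ∪ B) (hz : z ∉ A ∪ B)
    (hxy : G.dist x y = 2) (hzI : z ∈ interval G x y)
    (ha : a ∈ A) (hb : b ∈ B) (hab : G.Adj a b)
    (hxa : G.dist x a = k) (hxb : G.dist x b = k)
    (hya : G.dist y a = k) (hyb : G.dist y b = k)
    (hza : G.dist z a = k) (hzb : G.dist z b = k) (hk : 2 ≤ k) :
    (interval G x y ∩ B).Nonempty ∨
      ∃ u, G.Adj x u ∧ G.Adj y u ∧ u ∉ A ∪ B ∧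
        G.dist u a = k - 1 ∧ G.dist u b = k - 1 :=
  pseudoModular_local_convexity_obstruction_general G hpm A B hA hB x y a b k hx hxy ha hb hab hxa
    hxb hyb hk
end
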